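/- arXiv:1608.03928 — 2 statements merged into one kernel-verified Lean document; each statement's English description precedes it below -/
import Mathlib

section
/- Let F : ℝ^n → ℝ, A ∈ ℝ^{p×n}, b ∈ ℝ^p, and let (x*, λ*) ∈ ℝ^n × ℝ^p satisfy F(x) − F(x*) − ⟨λ*, Ax − b⟩ ≥ 0 for all x ∈ ℝ^n. If a point x̄ ∈ ℝ^n satisfies F(x̄) − F(x*) + γ‖Ax̄ − b‖ ≤ ε for some ε ≥ 0 and γ > ‖λ*‖, then ‖Ax̄ − b‖ ≤ ε/(γ − ‖λ*‖) and −‖λ*‖ε/(γ − ‖λ*‖) ≤ F(x̄) − F(x*) ≤ ε. -/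
open Matrix

/-- Euclidean norm of a vector in `ℝ^n` represented as `Fin n → ℝ`. -/
noncomputable def enorm2 {n : ℕ} (v : Fin n → ℝ) : ℝ := Real.sqrt (v ⬝ᵥ v)

/-!
Write `N = ‖Ax̄ − b‖`, `L = ‖λ*‖` and `d = F(x̄) − F(x*)`. The saddle-point inequality at `x̄`
together with Cauchy–Schwarz gives `−L N ≤ ⟨λ*, Ax̄ − b⟩ ≤ d`. Adding this to
`d + γ N ≤ ε` yields `(γ − L) N ≤ ε`, and substituting that bound on `N` back into `−L N ≤ d`
gives the lower bound on `d`; the upper bound is `d ≤ ε − γ N ≤ ε`.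
-/

lemma enorm2_eq_norm_toLp {n : ℕ} (v : Fin n → ℝ) : enorm2 v = ‖WithLp.toLp 2 v‖ := by
  have hinner : v ⬝ᵥ v = inner ℝ (WithLp.toLp 2 v) (WithLp.toLp 2 v) := by
    rw [EuclideanSpace.inner_toLp_toLp, star_trivial]
  rw [enorm2, hinner, real_inner_self_eq_norm_sq, Real.sqrt_sq (norm_nonneg _)]

lemma abs_dotProduct_le_enorm2_mul {n : ℕ} (v w : Fin n → ℝ) :
    |v ⬝ᵥ w| ≤ enorm2 v * enorm2 w := by
  simpa only [enorm2_eq_norm_toLp, EuclideanSpace.inner_toLp_toLp, star_trivial,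
    dotProduct_comm w v] using abs_real_inner_le_norm (WithLp.toLp 2 v) (WithLp.toLp 2 w)

lemma exact_penalty_bounds {L N d γ ε : ℝ} (hL : 0 ≤ L) (hN : 0 ≤ N) (hγ : L < γ)
    (hlow : -(L * N) ≤ d) (hbd : d + γ * N ≤ ε) :
    N ≤ ε / (γ - L) ∧ -(L * ε) / (γ - L) ≤ d ∧ d ≤ ε := by
  have hgap : 0 < γ - L := sub_pos.mpr hγ
  have hN_le : N ≤ ε / (γ - L) := by
    rw [le_div_iff₀ hgap]
    linarith
  refine ⟨hN_le, ?_, by linarith [mul_nonneg (hL.trans hγ.le) hN]⟩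
  calc -(L * ε) / (γ - L) = -(L * (ε / (γ - L))) := by ring
    _ ≤ -(L * N) := neg_le_neg (mul_le_mul_of_nonneg_left hN_le hL)
    _ ≤ d := hlow

theorem stmt_2_general {n p : ℕ} (F : (Fin n → ℝ) → ℝ)
    (A : Matrix (Fin p) (Fin n) ℝ) (b : Fin p → ℝ)
    (xstar : Fin n → ℝ) (lamstar : Fin p → ℝ)
    (hopt : ∀ x : Fin n → ℝ, 0 ≤ F x - F xstar - lamstar ⬝ᵥ (A *ᵥ x - b))
    (xbar : Fin n → ℝ) (ε γ : ℝ) (hγ : enorm2 lamstar < γ)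
    (hbd : F xbar - F xstar + γ * enorm2 (A *ᵥ xbar - b) ≤ ε) :
    enorm2 (A *ᵥ xbar - b) ≤ ε / (γ - enorm2 lamstar) ∧
      -(enorm2 lamstar * ε) / (γ - enorm2 lamstar) ≤ F xbar - F xstar ∧
      F xbar - F xstar ≤ ε := by
  have hlow : -(enorm2 lamstar * enorm2 (A *ᵥ xbar - b)) ≤ F xbar - F xstar := by
    linarith [neg_abs_le (lamstar ⬝ᵥ (A *ᵥ xbar - b)),
      abs_dotProduct_le_enorm2_mul lamstar (A *ᵥ xbar - b), hopt xbar]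
  exact exact_penalty_bounds (Real.sqrt_nonneg _) (Real.sqrt_nonneg _) hγ hlow hbd

/-- If `(x*, λ*)` satisfies `F(x) − F(x*) − ⟨λ*, Ax − b⟩ ≥ 0` for all `x`, and
`F(x̄) − F(x*) + γ‖Ax̄ − b‖ ≤ ε` with `ε ≥ 0` and `γ > ‖λ*‖`, then
`‖Ax̄ − b‖ ≤ ε/(γ − ‖λ*‖)` and `−‖λ*‖ε/(γ − ‖λ*‖) ≤ F(x̄) − F(x*) ≤ ε`. -/
theorem stmt_2 {n p : ℕ} (F : (Fin n → ℝ) → ℝ)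
    (A : Matrix (Fin p) (Fin n) ℝ) (b : Fin p → ℝ)
    (xstar : Fin n → ℝ) (lamstar : Fin p → ℝ)
    (hopt : ∀ x : Fin n → ℝ, 0 ≤ F x - F xstar - lamstar ⬝ᵥ (A *ᵥ x - b))
    (xbar : Fin n → ℝ) (ε γ : ℝ) (hε : 0 ≤ ε) (hγ : enorm2 lamstar < γ)
    (hbd : F xbar - F xstar + γ * enorm2 (A *ᵥ xbar - b) ≤ ε) :
    enorm2 (A *ᵥ xbar - b) ≤ ε / (γ - enorm2 lamstar) ∧
      -(enorm2 lamstar * ε) / (γ - enorm2 lamstar) ≤ F xbar - F xstar ∧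
      F xbar - F xstar ≤ ε :=
  stmt_2_general F A b xstar lamstar hopt xbar ε γ hγ hbd
end

section
/- Let x, x^k, x^{k+1} ∈ ℝ^n be arbitrary, and let W ∈ ℝ^{m×m} and u ∈ ℝ^m be such that U := W − euᵀ is symmetric. Then for any α > 0: Σ_{i=1}^m Σ_{j=1}^m w_{ij} ⟨H_i(x_i^{k+1} − x_i), H_j(x_j^{k+1} − x_j^k)⟩ ≤ (1/2)(‖y^{k+1} − y‖_V² − ‖y^k − y‖_V² + ‖y^{k+1} − y^k‖_V²) + (1/(2α))‖H(x^{k+1} − x)‖² + (α/2)‖Σ_{i=1}^m u_i (y_i^{k+1} − y_i^k)‖². -/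
open Matrix Finset

/-- `‖y‖_V²` for a block vector `y = (y_1,…,y_m)`, where `V = U ⊗ I` with
`U := W − euᵀ` (so `U_{ij} = W_{ij} − u_j`): `‖y‖_V² = Σ_{i,j} U_{ij} ⟨y_i, y_j⟩`. -/
def normVSq {m q : ℕ} (W : Matrix (Fin m) (Fin m) ℝ) (u : Fin m → ℝ)
    (y : Fin m → Fin q → ℝ) : ℝ :=
  ∑ i, ∑ j, (W i j - u j) * (y i ⬝ᵥ y j)

lemma dot_self_nonneg' {q : ℕ} (v : Fin q → ℝ) : 0 ≤ v ⬝ᵥ v :=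
  Finset.sum_nonneg fun i _ => mul_self_nonneg _

lemma young_dot {q : ℕ} (s t : Fin q → ℝ) (α : ℝ) (hα : 0 < α) :
    s ⬝ᵥ t ≤ (1 / (2 * α)) * (s ⬝ᵥ s) + (α / 2) * (t ⬝ᵥ t) := by
  have h := dot_self_nonneg' (s - α • t)
  have hexp : (s - α • t) ⬝ᵥ (s - α • t)
      = s ⬝ᵥ s - 2 * α * (s ⬝ᵥ t) + α ^ 2 * (t ⬝ᵥ t) := by
    simp [sub_dotProduct, dotProduct_sub, smul_dotProduct, dotProduct_smul,
      dotProduct_comm t s]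
    ring
  rw [hexp] at h
  have h2 : 2 * α * (s ⬝ᵥ t) ≤ s ⬝ᵥ s + α ^ 2 * (t ⬝ᵥ t) := by linarith
  calc s ⬝ᵥ t = (2 * α * (s ⬝ᵥ t)) / (2 * α) := by field_simp
    _ ≤ (s ⬝ᵥ s + α ^ 2 * (t ⬝ᵥ t)) / (2 * α) :=
        (div_le_div_iff_of_pos_right (by positivity)).mpr h2
    _ = (1 / (2 * α)) * (s ⬝ᵥ s) + (α / 2) * (t ⬝ᵥ t) := by field_simp

lemma sum_dotProduct' {ι q : ℕ} (f : Fin ι → Fin q → ℝ) (v : Fin q → ℝ) :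
    (∑ i, f i) ⬝ᵥ v = ∑ i, f i ⬝ᵥ v := by
  simp only [dotProduct, Finset.sum_apply, Finset.sum_mul]
  exact Finset.sum_comm

lemma dotProduct_sum' {ι q : ℕ} (v : Fin q → ℝ) (f : Fin ι → Fin q → ℝ) :
    v ⬝ᵥ (∑ i, f i) = ∑ i, v ⬝ᵥ f i := by
  simp only [dotProduct, Finset.sum_apply, Finset.mul_sum]
  exact Finset.sum_comm

lemma normVSq_identity {m q : ℕ} (W : Matrix (Fin m) (Fin m) ℝ) (u : Fin m → ℝ)
    (hU : ∀ i j : Fin m, W i j - u j = W j i - u i)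
    (a b : Fin m → Fin q → ℝ) :
    normVSq W u a - normVSq W u (a - b) + normVSq W u b
      = 2 * ∑ i, ∑ j, (W i j - u j) * (a i ⬝ᵥ b j) := by
  have hswap : ∑ i, ∑ j, (W i j - u j) * (b i ⬝ᵥ a j)
      = ∑ i, ∑ j, (W i j - u j) * (a i ⬝ᵥ b j) := by
    rw [Finset.sum_comm]
    refine Finset.sum_congr rfl fun i _ => Finset.sum_congr rfl fun j _ => ?_
    rw [hU j i, dotProduct_comm]
  unfold normVSq
  simp only [Pi.sub_apply, sub_dotProduct, dotProduct_sub, mul_sub,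
    Finset.sum_sub_distrib]
  linarith [hswap]

/-- Proposition 1, inequality (10) (`y`-version): with `y_i := H_i x_i`
(similarly `y^k`, `y^{k+1}` from `x^k`, `x^{k+1}`), `U := W − euᵀ` symmetric and
any `α > 0`:
`Σ_{i,j} w_{ij} ⟨H_i(x_i^{k+1} − x_i), H_j(x_j^{k+1} − x_j^k)⟩
  ≤ (1/2)(‖y^{k+1} − y‖_V² − ‖y^k − y‖_V² + ‖y^{k+1} − y^k‖_V²)
    + (1/(2α))‖H(x^{k+1} − x)‖² + (α/2)‖Σ_i u_i (y_i^{k+1} − y_i^k)‖²`. -/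
theorem stmt_4 {m q : ℕ} {n : Fin m → ℕ}
    (H : ∀ i : Fin m, Matrix (Fin q) (Fin (n i)) ℝ)
    (W : Matrix (Fin m) (Fin m) ℝ) (u : Fin m → ℝ)
    (hU : ∀ i j : Fin m, W i j - u j = W j i - u i)  -- U = W − euᵀ is symmetric
    (x xk xk1 : ∀ i : Fin m, Fin (n i) → ℝ)
    (α : ℝ) (hα : 0 < α)
    (y yk yk1 : Fin m → Fin q → ℝ)
    (hy : y = fun i => H i *ᵥ x i) (hyk : yk = fun i => H i *ᵥ xk i)
    (hyk1 : yk1 = fun i => H i *ᵥ xk1 i) :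
    ∑ i, ∑ j, W i j * ((H i *ᵥ (xk1 i - x i)) ⬝ᵥ (H j *ᵥ (xk1 j - xk j)))
      ≤ (1 / 2) * (normVSq W u (yk1 - y) - normVSq W u (yk - y)
            + normVSq W u (yk1 - yk))
        + (1 / (2 * α)) *
            ((∑ i, H i *ᵥ (xk1 i - x i)) ⬝ᵥ (∑ i, H i *ᵥ (xk1 i - x i)))
        + (α / 2) *
            ((∑ i, u i • (yk1 i - yk i)) ⬝ᵥ (∑ i, u i • (yk1 i - yk i))) := by
  have hab : yk - y = (yk1 - y) - (yk1 - yk) := by abel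
  have key := normVSq_identity W u hU (yk1 - y) (yk1 - yk)
  rw [← hab] at key
  have hmv : ∀ i, H i *ᵥ (xk1 i - x i) = yk1 i - y i := by
    intro i; rw [hy, hyk1, Matrix.mulVec_sub]
  have hmv2 : ∀ j, H j *ᵥ (xk1 j - xk j) = yk1 j - yk j := by
    intro j; rw [hyk, hyk1, Matrix.mulVec_sub]
  simp only [hmv, hmv2]
  have hdot : (∑ i, (yk1 i - y i)) ⬝ᵥ (∑ i, u i • (yk1 i - yk i))
      = ∑ i, ∑ j, u j * ((yk1 i - y i) ⬝ᵥ (yk1 j - yk j)) := by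
    rw [sum_dotProduct']
    refine Finset.sum_congr rfl fun i _ => ?_
    rw [dotProduct_sum']
    refine Finset.sum_congr rfl fun j _ => ?_
    rw [dotProduct_smul]; rfl
  have hsplit : ∑ i, ∑ j, W i j * ((yk1 i - y i) ⬝ᵥ (yk1 j - yk j))
      = (∑ i, ∑ j, (W i j - u j) * ((yk1 i - y i) ⬝ᵥ (yk1 j - yk j)))
        + ∑ i, ∑ j, u j * ((yk1 i - y i) ⬝ᵥ (yk1 j - yk j)) := by
    rw [← Finset.sum_add_distrib]
    refine Finset.sum_congr rfl fun i _ => ?_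
    rw [← Finset.sum_add_distrib]
    refine Finset.sum_congr rfl fun j _ => ?_
    ring
  have hyoung := young_dot (∑ i, (yk1 i - y i)) (∑ i, u i • (yk1 i - yk i)) α hα
  rw [hdot] at hyoung
  simp only [Pi.sub_apply] at key
  rw [hsplit]
  linarith [key, hyoung]
end
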